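/- Define integers Y_1 = 1 and, for n ≥ 2, Y_n = −(n−1)·Y_{n−1} + Σ_{j=2}^{n−2} (j−1)·Y_j·Y_{n−j} (the sum being empty for n ≤ 3). Then for every n ≥ 1, Y_n = (−1)^{n+1}·Cat(n−1), where Cat(k) denotes the k-th Catalan number (Cat(0) = Cat(1) = 1, Cat(2) = 2, Cat(3) = 5, …). -/
import Mathlib


/-- The `λ = -1` member of the family `X_{n,λ}`: `Y_1 = 1` and, for `n ≥ 2`,
`Y_n = -(n-1)·Y_{n-1} + ∑_{j=2}^{n-2} (j-1)·Y_j·Y_{n-j}` (the sum being empty for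
`n ≤ 3`; it is written over the attached index set to establish termination). -/
def Y : ℕ → ℤ
  | 0 => 1
  | 1 => 1
  | n + 2 =>
      -((n : ℤ) + 1) * Y (n + 1) +
        ∑ j ∈ (Finset.Icc 2 n).attach, ((j.1 : ℤ) - 1) * Y j.1 * Y (n + 2 - j.1)
decreasing_by
  · exact Nat.lt_succ_self (n + 1)
  · have := j.2; rw [Finset.mem_Icc] at this; omega
  · have := j.2; rw [Finset.mem_Icc] at this; omega

lemma cat_rec (n : ℕ) : (n + 2) * catalan (n + 1) = (4 * n + 2) * catalan n := by
  have h1 := succ_mul_catalan_eq_centralBinom (n + 1)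
  have h2 := Nat.succ_mul_centralBinom_succ n
  have h3 := succ_mul_catalan_eq_centralBinom n
  have key : (n + 1) * ((n + 2) * catalan (n + 1)) = (n + 1) * ((4 * n + 2) * catalan n) := by
    rw [show n + 2 = n + 1 + 1 from rfl, h1, h2, ← h3]; ring
  exact Nat.eq_of_mul_eq_mul_left (by omega) key

lemma sum_sym (m : ℕ) :
    2 * ∑ i ∈ Finset.range (m + 1), i * catalan i * catalan (m - i) = m * catalan (m + 1) := by
  have hrefl : ∑ i ∈ Finset.range (m + 1), i * catalan i * catalan (m - i)
      = ∑ i ∈ Finset.range (m + 1), (m - i) * catalan (m - i) * catalan i := by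
    rw [← Finset.sum_range_reflect]
    apply Finset.sum_congr rfl
    intro i hi
    rw [Finset.mem_range] at hi
    congr 2 <;> congr 1 <;> omega
  have : 2 * ∑ i ∈ Finset.range (m + 1), i * catalan i * catalan (m - i)
      = ∑ i ∈ Finset.range (m + 1), m * (catalan i * catalan (m - i)) := by
    rw [two_mul]
    nth_rewrite 2 [hrefl]
    rw [← Finset.sum_add_distrib]
    apply Finset.sum_congr rfl
    intro i hi
    rw [Finset.mem_range] at hi
    have hi' : i + (m - i) = m := by omega
    calc i * catalan i * catalan (m - i) + (m - i) * catalan (m - i) * catalan i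
        = (i + (m - i)) * (catalan i * catalan (m - i)) := by ring
      _ = m * (catalan i * catalan (m - i)) := by rw [hi']
  rw [this, ← Finset.mul_sum]
  congr 1
  rw [catalan_succ',
    Finset.Nat.sum_antidiagonal_eq_sum_range_succ (fun x y => catalan x * catalan y) m]

-- S = (2m+1) C m − C (m+1)  over ℤ
lemma sum_eq (m : ℕ) :
    (∑ i ∈ Finset.range (m + 1), (i : ℤ) * catalan i * catalan (m - i))
      = (2 * m + 1) * catalan m - catalan (m + 1) := by
  have h1 : (2 : ℤ) * ∑ i ∈ Finset.range (m + 1), (i : ℤ) * catalan i * catalan (m - i)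
      = m * catalan (m + 1) := by
    exact_mod_cast congrArg (Nat.cast : ℕ → ℤ) (sum_sym m)
  have h2 : ((m : ℤ) + 2) * catalan (m + 1) = (4 * m + 2) * catalan m := by
    exact_mod_cast congrArg (Nat.cast : ℕ → ℤ) (cat_rec m)
  linarith

/-- For every `n ≥ 1`, `Y_n = (-1)^{n+1}·Cat(n-1)`, where `Cat` is the Catalan number. -/
theorem Y_eq_neg_one_pow_mul_catalan (n : ℕ) (hn : 1 ≤ n) :
    Y n = (-1) ^ (n + 1) * (catalan (n - 1) : ℤ) := by
  induction n using Nat.strong_induction_on with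
  | _ n ih =>
    match n, hn with
    | 1, _ => simp [Y]
    | (m + 2), _ =>
      rw [Y]
      rw [Finset.sum_attach (Finset.Icc 2 m) (fun j => ((j : ℤ) - 1) * Y j * Y (m + 2 - j))]
      -- rewrite Y (m+1) and Y j, Y (m+2-j) via ih
      rw [ih (m + 1) (by omega) (by omega)]
      have hsum : ∑ j ∈ Finset.Icc 2 m, ((j : ℤ) - 1) * Y j * Y (m + 2 - j)
          = ∑ j ∈ Finset.Icc 2 m,
              ((j : ℤ) - 1) * (-1 : ℤ) ^ m * (catalan (j - 1) * catalan (m + 1 - j)) := by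
        apply Finset.sum_congr rfl
        intro j hj
        rw [Finset.mem_Icc] at hj
        rw [ih j (by omega) (by omega), ih (m + 2 - j) (by omega) (by omega)]
        have e1 : m + 2 - j - 1 = m + 1 - j := by omega
        rw [e1]
        have e2 : (-1 : ℤ) ^ (j + 1) * (-1 : ℤ) ^ (m + 2 - j + 1) = (-1 : ℤ) ^ m := by
          rw [← pow_add]
          have : j + 1 + (m + 2 - j + 1) = m + 4 := by omega
          rw [this]
          rw [show m + 4 = m + 2 * 2 by ring, pow_add]
          simp [pow_mul]
        calc ((j : ℤ) - 1) * ((-1) ^ (j + 1) * catalan (j - 1)) *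
              ((-1) ^ (m + 2 - j + 1) * catalan (m + 1 - j))
            = ((j : ℤ) - 1) * ((-1 : ℤ) ^ (j + 1) * (-1 : ℤ) ^ (m + 2 - j + 1)) *
              (catalan (j - 1) * catalan (m + 1 - j)) := by ring
          _ = _ := by rw [e2]
      rw [hsum]
      -- reindex: j = i + 1
      have hre : ∑ j ∈ Finset.Icc 2 m,
            ((j : ℤ) - 1) * (-1 : ℤ) ^ m * (catalan (j - 1) * catalan (m + 1 - j))
          = (-1 : ℤ) ^ m *
            ∑ i ∈ Finset.Icc 1 (m - 1), (i : ℤ) * catalan i * catalan (m - i) := by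
        rw [Finset.mul_sum]
        refine Finset.sum_nbij' (fun j => j - 1) (fun i => i + 1) ?_ ?_ ?_ ?_ ?_
        · intro j hj; simp only [Finset.mem_Icc] at hj ⊢; omega
        · intro i hi; simp only [Finset.mem_Icc] at hi ⊢; omega
        · intro j hj; simp only [Finset.mem_Icc] at hj; show j - 1 + 1 = j; omega
        · intro i hi; simp only [Finset.mem_Icc] at hi; show i + 1 - 1 = i; omega
        · intro j hj
          rw [Finset.mem_Icc] at hj
          have e1 : ((j : ℤ) - 1) = ((j - 1 : ℕ) : ℤ) := by push_cast [Nat.cast_sub (by omega : 1 ≤ j)]; ring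
          have e2 : m + 1 - j = m - (j - 1) := by omega
          rw [e1, e2]; ring
      rw [hre]
      -- relate Icc 1 (m-1) sum to range (m+1) sum
      have hS : ∑ i ∈ Finset.Icc 1 (m - 1), (i : ℤ) * catalan i * catalan (m - i)
          = (∑ i ∈ Finset.range (m + 1), (i : ℤ) * catalan i * catalan (m - i))
            - m * catalan m := by
        rcases Nat.eq_zero_or_pos m with hm | hm
        · subst hm; simp
        · have hsplit : Finset.range (m + 1) = insert 0 (insert m (Finset.Icc 1 (m - 1))) ∨ m = 1 := by
            rcases Nat.lt_or_ge m 2 with h2 | h2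
            · right; omega
            · left
              ext x
              simp only [Finset.mem_range, Finset.mem_insert, Finset.mem_Icc]
              omega
          rcases hsplit with h | h
          · rw [h]
            rw [Finset.sum_insert (by simp [Finset.mem_Icc]; omega)]
            rw [Finset.sum_insert (by simp [Finset.mem_Icc]; omega)]
            simp only [Nat.cast_zero, zero_mul, Nat.sub_self, catalan_zero, Nat.cast_one]
            ring
          · subst h
            norm_num [Finset.range_add_one, catalan_one]
      rw [hS, sum_eq m]
      have e3 : m + 2 - 1 = m + 1 := by omega
      have e4 : m + 1 - 1 = m := by omega
      rw [e3, e4]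
      have e5 : (-1 : ℤ) ^ (m + 2) = (-1) ^ m := by
        rw [pow_add]; norm_num
      have e6 : (-1 : ℤ) ^ (m + 3) = -(-1) ^ m := by
        rw [pow_add]; norm_num [pow_succ]
      rw [e5, e6]
      push_cast
      ring
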